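/- arXiv:1004.1623 — 6 statements merged into one kernel-verified Lean document; each statement's English description precedes it below -/
import Mathlib

section
/- If α is a Θ_ν-distributed complex random variable (ν > 1) and p, q are nonnegative integers, then E[α^p ᾱ^q] = δ_{pq} · 2^p p! / ((ν+1)(ν+3)···(ν+2p-1)). -/
/-!
In polar coordinates `z = r e^{iθ}` the moment factors as a radial integral times
`∫_{-π}^{π} e^{i(p-q)θ} dθ`, which vanishes unless `p = q`. For `p = q` the substitution
`u = r²` turns the radial integral into half the Beta integral
`B(p + 1, (ν - 1)/2) = p! / ∏_{j ≤ p} ((ν - 1)/2 + j)`.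
-/

open MeasureTheory Set Complex

theorem polarCoord_symm_eq_ofReal_mul_exp (r θ : ℝ) :
    Complex.polarCoord.symm (r, θ) = r * exp (θ * I) := by
  rw [Complex.polarCoord_symm_apply, exp_mul_I]
  push_cast
  ring

theorem pow_mul_conj_pow_ofReal_mul_exp (r θ : ℝ) (p q : ℕ) :
    ((r : ℂ) * exp (θ * I)) ^ p * (starRingEnd ℂ ((r : ℂ) * exp (θ * I))) ^ q =
      (r : ℂ) ^ (p + q) * exp (((p - q : ℤ) : ℂ) * θ * I) := by
  rw [map_mul, conj_ofReal, ← exp_conj, map_mul, conj_I, conj_ofReal, mul_pow, mul_pow,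
    ← exp_nat_mul, ← exp_nat_mul, pow_add,
    show ((p - q : ℤ) : ℂ) * θ * I = p * (θ * I) + q * (θ * -I) by push_cast; ring, exp_add]
  ring

theorem setIntegral_norm_lt_one_pow_mul_conj_pow_mul_radial (φ : ℝ → ℂ) (p q : ℕ) :
    ∫ z in {z : ℂ | ‖z‖ < 1}, z ^ p * (starRingEnd ℂ z) ^ q * φ ‖z‖ =
      (∫ r in Ioo (0 : ℝ) 1, (r : ℂ) ^ (p + q + 1) * φ r) *
        ∫ θ in Ioo (-Real.pi) Real.pi, exp (((p - q : ℤ) : ℂ) * θ * I) := by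
  have hS : MeasurableSet {z : ℂ | ‖z‖ < 1} :=
    measurableSet_lt measurable_norm measurable_const
  have h_polar : ∀ x ∈ polarCoord.target, x.1 • {z : ℂ | ‖z‖ < 1}.indicator
      (fun z => z ^ p * (starRingEnd ℂ z) ^ q * φ ‖z‖) (Complex.polarCoord.symm x) =
      (Iio 1 ×ˢ univ).indicator (fun x : ℝ × ℝ =>
        (x.1 : ℂ) ^ (p + q + 1) * φ x.1 * exp (((p - q : ℤ) : ℂ) * x.2 * I)) x := by
    rintro ⟨r, θ⟩ ⟨hr : 0 < r, -⟩
    have h_norm : ‖(r : ℂ) * exp (θ * I)‖ = r := by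
      rw [norm_mul, norm_exp_ofReal_mul_I, mul_one, norm_real, Real.norm_of_nonneg hr.le]
    simp only [indicator, polarCoord_symm_eq_ofReal_mul_exp, mem_ofPred_eq, mem_prod, mem_Iio,
      mem_univ, and_true, h_norm]
    split_ifs
    · rw [real_smul, pow_mul_conj_pow_ofReal_mul_exp]
      ring
    · exact smul_zero _
  have h_target :
      polarCoord.target ∩ Iio 1 ×ˢ univ = Ioo (0 : ℝ) 1 ×ˢ Ioo (-Real.pi) Real.pi := by
    rw [polarCoord_target, prod_inter_prod, Ioi_inter_Iio, inter_univ]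
  rw [← integral_indicator hS, ← Complex.integral_comp_polarCoord_symm,
    setIntegral_congr_fun polarCoord.open_target.measurableSet h_polar,
    setIntegral_indicator (measurableSet_Iio.prod MeasurableSet.univ), h_target,
    Measure.volume_eq_prod]
  exact setIntegral_prod_mul (fun r : ℝ => (r : ℂ) ^ (p + q + 1) * φ r)
    (fun θ : ℝ => exp (((p - q : ℤ) : ℂ) * θ * I)) _ _

theorem integral_exp_int_mul_mul_I (n : ℤ) :
    ∫ θ in Ioo (-Real.pi) Real.pi, exp (n * θ * I) = if n = 0 then 2 * Real.pi else 0 := by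
  rw [← integral_Ioc_eq_integral_Ioo,
    ← intervalIntegral.integral_of_le (by linarith [Real.pi_pos])]
  split_ifs with hn
  · simp only [hn, Int.cast_zero, zero_mul, exp_zero, intervalIntegral.integral_const,
      sub_neg_eq_add, real_smul, mul_one]
    push_cast
    ring
  · have hn' : (n : ℝ) ≠ 0 := by exact_mod_cast hn
    have h_scale := intervalIntegral.integral_comp_mul_left (a := -Real.pi) (b := Real.pi)
      (fun t : ℝ => exp (t * I)) hn'
    push_cast at h_scale
    rw [h_scale, mul_neg, integral_exp_mul_I_eq_sin, Real.sin_int_mul_pi, ofReal_zero, mul_zero,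
      smul_zero]

theorem setIntegral_Ioo_zero_one_smul_comp_sq {E : Type*} [NormedAddCommGroup E]
    [NormedSpace ℝ E] (g : ℝ → E) :
    ∫ r in Ioo (0 : ℝ) 1, r • g (r ^ 2) = (2 : ℝ)⁻¹ • ∫ u in Ioo (0 : ℝ) 1, g u := by
  have h_mono : StrictMonoOn (fun x : ℝ => x ^ 2) (Ici 0) := pow_left_strictMonoOn₀ two_ne_zero
  have h_image : (fun x : ℝ => x ^ 2) '' Ioo 0 1 = Ioo 0 1 := by
    simpa using (continuous_pow 2).continuousOn.image_Ioo_of_strictMonoOn zero_le_one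
      (h_mono.mono Icc_subset_Ici_self)
  have h_subst := integral_image_eq_integral_abs_deriv_smul (f' := fun x : ℝ => 2 * x)
    (measurableSet_Ioo (a := 0) (b := 1))
    (fun x _ => by simpa using (hasDerivAt_pow 2 x).hasDerivWithinAt)
    (h_mono.injOn.mono (Ioo_subset_Icc_self.trans Icc_subset_Ici_self)) g
  rw [h_image] at h_subst
  rw [h_subst, ← integral_smul]
  refine setIntegral_congr_fun measurableSet_Ioo fun x hx => ?_
  rw [abs_of_pos (by linarith [hx.1]), smul_smul, inv_mul_cancel_left₀ two_ne_zero]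

theorem setIntegral_Ioo_pow_mul_one_sub_rpow (p : ℕ) {t : ℝ} (ht : 0 < t) :
    ∫ u in Ioo (0 : ℝ) 1, (u : ℂ) ^ p * (((1 - u) ^ (t - 1) : ℝ) : ℂ) =
      p.factorial / ∏ j ∈ Finset.range (p + 1), ((t : ℂ) + j) := by
  rw [← betaIntegral_eval_nat_add_one_right (by simpa using ht), ← betaIntegral_symm,
    betaIntegral, intervalIntegral.integral_of_le zero_le_one, integral_Ioc_eq_integral_Ioo]
  refine setIntegral_congr_fun measurableSet_Ioo fun u ⟨_, hu1⟩ => ?_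
  rw [add_sub_cancel_right, cpow_natCast, ofReal_cpow (by linarith)]
  push_cast
  rfl

theorem setIntegral_Ioo_pow_mul_one_sub_sq_rpow (p : ℕ) {t : ℝ} (ht : 0 < t) :
    ∫ r in Ioo (0 : ℝ) 1, (r : ℂ) ^ (2 * p + 1) * (((1 - r ^ 2) ^ (t - 1) : ℝ) : ℂ) =
      p.factorial / (2 * ∏ j ∈ Finset.range (p + 1), ((t : ℂ) + j)) := by
  have h := setIntegral_Ioo_zero_one_smul_comp_sq
    (fun u : ℝ => (u : ℂ) ^ p * (((1 - u) ^ (t - 1) : ℝ) : ℂ))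
  rw [setIntegral_Ioo_pow_mul_one_sub_rpow p ht] at h
  simp only [real_smul] at h
  push_cast at h
  convert h using 1
  · congr 1 with r
    ring
  · ring

theorem prod_range_succ_sub_one_div_two_add (ν : ℂ) (p : ℕ) :
    ∏ j ∈ Finset.range (p + 1), ((ν - 1) / 2 + j) =
      (ν - 1) / 2 * (∏ j ∈ Finset.range p, (ν + 2 * j + 1)) / 2 ^ p := by
  rw [Finset.prod_range_succ', Nat.cast_zero, add_zero, Finset.pow_eq_prod_const, mul_div_assoc,
    ← Finset.prod_div_distrib, mul_comm]
  congr 1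
  refine Finset.prod_congr rfl fun j _ => ?_
  push_cast
  ring

theorem prod_range_add_two_mul_add_one_ne_zero {ν : ℝ} (hν : 0 < ν + 1) (p : ℕ) :
    ∏ j ∈ Finset.range p, ((ν : ℂ) + 2 * j + 1) ≠ 0 :=
  Finset.prod_ne_zero_iff.2 fun j _ h => by
    have h_re := congrArg re h
    simp only [add_re, ofReal_re, mul_re, re_ofNat, natCast_re, im_ofNat, natCast_im, mul_zero,
      sub_zero, one_re, zero_re] at h_re
    linarith [(by positivity : (0 : ℝ) ≤ 2 * j)]

theorem stmt1 (ν : ℝ) (hν : 1 < ν) (p q : ℕ) :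
    (((ν - 1) / (2 * Real.pi) : ℝ) : ℂ) *
      ∫ z in {z : ℂ | ‖z‖ < 1},
        z ^ p * (starRingEnd ℂ z) ^ q * (((1 - ‖z‖ ^ 2 : ℝ) ^ ((ν - 3) / 2) : ℝ) : ℂ) =
    if p = q then
      ((2 : ℂ) ^ p * (Nat.factorial p : ℂ)) / ∏ j ∈ Finset.range p, ((ν : ℂ) + 2 * j + 1)
    else 0 := by
  rw [setIntegral_norm_lt_one_pow_mul_conj_pow_mul_radial
    (fun r => (((1 - r ^ 2) ^ ((ν - 3) / 2) : ℝ) : ℂ)), integral_exp_int_mul_mul_I]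
  split_ifs with h_int h_nat h_nat
  · subst h_nat
    rw [show (ν - 3) / 2 = (ν - 1) / 2 - 1 by ring, ← two_mul,
      setIntegral_Ioo_pow_mul_one_sub_sq_rpow p (by linarith)]
    have hν' : (ν : ℂ) - 1 ≠ 0 := by exact_mod_cast (sub_pos.2 hν).ne'
    have hπ : (Real.pi : ℂ) ≠ 0 := by exact_mod_cast Real.pi_ne_zero
    have h_ne := prod_range_add_two_mul_add_one_ne_zero (by linarith : 0 < ν + 1) p
    push_cast
    rw [prod_range_succ_sub_one_div_two_add]
    field_simp
  · omega
  · omega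
  · simp
end

section
/- Gauss's summation formula: for ν > 1 and complex λ, μ with Re(λ+μ) > -1, the hypergeometric series ∑_{p=0}^∞ (-λ)_p(-μ)_p / (p! ((ν+1)/2)_p) converges and equals Γ(λ+μ+(ν+1)/2)Γ((ν+1)/2) / (Γ(λ+(ν+1)/2)Γ(μ+(ν+1)/2)). -/
/-!
Write `F(c) = ∑ (a)_k (b)_k / (k! (c)_k)`. Comparing Pochhammer symbols with Euler's sequence
`GammaSeq s n = n^s n! / (s)_{n+1} → Γ(s)` shows that the `k`-th term is `O(k^(a+b-c-1))`, so the
series converges absolutely when `Re(c - a - b) > 0`, and moreover `k · (k-th term) → 0`.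
Telescoping then gives the contiguous relation `c (c-a-b) F(c) = (c-a) (c-b) F(c+1)`, and by
iteration `F(c) = (c-a)_n (c-b)_n / ((c)_n (c-a-b)_n) · F(c+n)`. For real `c > 0` every term of
`F(c+n)` but the first is at most `c / (c+n)` times the corresponding term of `F(c)`, so
`F(c+n) → 1`, while Euler's limit again sends the Pochhammer quotient to
`Γ(c) Γ(c-a-b) / (Γ(c-a) Γ(c-b))`. The theorem is the case `a = -λ`, `b = -μ`, `c = (ν+1)/2`.
-/

open Filter Topology Asymptotics Finset
open scoped Nat

theorem ascPochhammer_eval_eq_prod_range {R : Type*} [CommSemiring R] (n : ℕ) (r : R) :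
    (ascPochhammer R n).eval r = ∏ j ∈ range n, (r + j) := by
  induction n with
  | zero => simp
  | succ n ih => rw [ascPochhammer_succ_eval, ih, prod_range_succ]

theorem ascPochhammer_eval_ne_zero {R : Type*} [CommRing R] [IsDomain R] {s : R}
    (hs : ∀ m : ℕ, s ≠ -m) (n : ℕ) : (ascPochhammer R n).eval s ≠ 0 := by
  rw [ne_eq, ascPochhammer_eval_eq_zero_iff]
  rintro ⟨k, -, hk⟩
  exact hs k (by rw [hk, neg_neg])

theorem ne_neg_natCast_add_natCast {R : Type*} [CommRing R] {s : R} (hs : ∀ m : ℕ, s ≠ -m)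
    (n m : ℕ) : s + n ≠ -m := by
  intro h
  exact hs (m + n) (by push_cast; linear_combination h)

theorem ascPochhammer_eval_le_eval {S : Type*} [Semiring S] [PartialOrder S]
    [IsStrictOrderedRing S] (n : ℕ) {x y : S} (hx : 0 < x) (hxy : x ≤ y) :
    (ascPochhammer S n).eval x ≤ (ascPochhammer S n).eval y := by
  induction n with
  | zero => simp
  | succ n ih =>
    rw [ascPochhammer_succ_eval, ascPochhammer_succ_eval]
    exact mul_le_mul ih (add_le_add_left hxy _) (by positivity)
      (ascPochhammer_pos _ _ (hx.trans_le hxy)).le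

theorem mul_ascPochhammer_eval_succ_le {S : Type*} [CommSemiring S] [PartialOrder S]
    [IsStrictOrderedRing S] (n : ℕ) {x y : S} (hx : 0 < x) (hxy : x ≤ y) :
    y * (ascPochhammer S (n + 1)).eval x ≤ x * (ascPochhammer S (n + 1)).eval y := by
  simp only [ascPochhammer_succ_left, Polynomial.eval_mul, Polynomial.eval_X,
    Polynomial.eval_comp, Polynomial.eval_add, Polynomial.eval_one]
  rw [mul_left_comm x]
  exact mul_le_mul_of_nonneg_left (mul_le_mul_of_nonneg_left
    (ascPochhammer_eval_le_eval n (by positivity) (add_le_add_left hxy 1)) hx.le) (hx.le.trans hxy)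

namespace Complex

theorem ne_neg_natCast_of_re_pos {s : ℂ} (hs : 0 < s.re) (m : ℕ) : s ≠ -m := by
  rintro rfl
  have := Nat.cast_nonneg (α := ℝ) m
  simp at hs
  linarith

theorem tendsto_natCast_cpow_inv {s : ℂ} (hs : 0 < s.re) :
    Tendsto (fun n : ℕ ↦ ((n : ℂ) ^ s)⁻¹) atTop (𝓝 0) := by
  rw [tendsto_zero_iff_norm_tendsto_zero]
  refine (((tendsto_rpow_atTop hs).comp tendsto_natCast_atTop_atTop).inv_tendsto_atTop).congr' ?_
  filter_upwards [eventually_gt_atTop 0] with n hn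
  simp [norm_natCast_cpow_of_pos hn]

theorem ascPochhammer_eval_succ_eq_mul_GammaSeq_inv (s : ℂ) {n : ℕ} (hn : n ≠ 0) :
    (ascPochhammer ℂ (n + 1)).eval s = n ^ s * n ! * (GammaSeq s n)⁻¹ := by
  have : (n : ℂ) ^ s * n ! ≠ 0 :=
    mul_ne_zero (by simp [cpow_eq_zero_iff, hn]) (by exact_mod_cast n.factorial_ne_zero)
  rw [GammaSeq, inv_div, mul_div_cancel₀ _ this, ascPochhammer_eval_eq_prod_range]

/-- At a pole `s = -m` both sides are junk zeros: `GammaSeq s n = 0` for `n ≥ m`, and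
`Gamma s = 0`. -/
theorem tendsto_GammaSeq_inv (s : ℂ) :
    Tendsto (fun n ↦ (GammaSeq s n)⁻¹) atTop (𝓝 (Gamma s)⁻¹) := by
  by_cases hs : ∀ m : ℕ, s ≠ -m
  · exact (GammaSeq_tendsto_Gamma s).inv₀ (Gamma_ne_zero hs)
  push Not at hs
  obtain ⟨m, rfl⟩ := hs
  rw [Gamma_neg_nat_eq_zero, inv_zero]
  refine tendsto_const_nhds.congr' ?_
  filter_upwards [eventually_ge_atTop m] with n hmn
  rw [GammaSeq, prod_eq_zero (mem_range.2 (Nat.lt_succ_of_le hmn)) (neg_add_cancel _)]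
  simp

theorem tendsto_cpow_mul_ascPochhammer_div (a b c d : ℂ) :
    Tendsto (fun n : ℕ ↦ (n : ℂ) ^ (c + d - a - b) *
        ((ascPochhammer ℂ (n + 1)).eval a * (ascPochhammer ℂ (n + 1)).eval b /
          ((ascPochhammer ℂ (n + 1)).eval c * (ascPochhammer ℂ (n + 1)).eval d)))
      atTop (𝓝 (Gamma c * Gamma d / (Gamma a * Gamma b))) := by
  have hlim := (((GammaSeq_tendsto_Gamma c).mul (GammaSeq_tendsto_Gamma d)).mul
    (tendsto_GammaSeq_inv a)).mul (tendsto_GammaSeq_inv b)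
  rw [mul_assoc, ← mul_inv, ← div_eq_mul_inv] at hlim
  refine hlim.congr' ?_
  filter_upwards [eventually_ne_atTop 0] with n hn
  have hn' : (n : ℂ) ≠ 0 := Nat.cast_ne_zero.2 hn
  have hfac : (n ! : ℂ) ≠ 0 := by exact_mod_cast n.factorial_ne_zero
  simp only [ascPochhammer_eval_succ_eq_mul_GammaSeq_inv _ hn]
  rw [cpow_sub _ _ hn', cpow_sub _ _ hn', cpow_add _ _ hn']
  field_simp [cpow_ne_zero_iff, hn']

variable (a b : ℂ)

theorem tendsto_cpow_mul_ordinaryHypergeometricCoefficient (c : ℂ) :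
    Tendsto (fun n : ℕ ↦
        (n : ℂ) ^ (1 + c - a - b) * ordinaryHypergeometricCoefficient a b c (n + 1))
      atTop (𝓝 (Gamma c / (Gamma a * Gamma b))) := by
  have h := tendsto_cpow_mul_ascPochhammer_div a b 1 c
  rw [Gamma_one, one_mul] at h
  refine h.congr fun n ↦ ?_
  rw [ascPochhammer_eval_one]
  ring

theorem isBigO_ordinaryHypergeometricCoefficient_succ (c : ℂ) :
    (fun n : ℕ ↦ ordinaryHypergeometricCoefficient a b c (n + 1)) =O[atTop]
      fun n : ℕ ↦ 1 / (n : ℂ) ^ (1 + c - a - b) := by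
  have hbdd := (tendsto_cpow_mul_ordinaryHypergeometricCoefficient a b c).isBigO_one ℂ
  refine ((isBigO_refl (fun n : ℕ ↦ 1 / (n : ℂ) ^ (1 + c - a - b)) atTop).mul hbdd).congr' ?_
    (Eventually.of_forall fun n ↦ mul_one _)
  filter_upwards [eventually_ne_atTop 0] with n hn
  field_simp [cpow_ne_zero_iff, hn]

theorem summable_norm_ordinaryHypergeometricCoefficient {c : ℂ} (h : 0 < (c - a - b).re) :
    Summable fun n ↦ ‖ordinaryHypergeometricCoefficient a b c n‖ := by
  rw [← summable_nat_add_iff 1]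
  refine summable_of_isBigO_nat' (summable_one_div_nat_cpow.2 ?_)
    (isBigO_ordinaryHypergeometricCoefficient_succ a b c).norm_left
  simp only [sub_re, add_re, one_re] at h ⊢
  linarith

theorem tendsto_natCast_mul_ordinaryHypergeometricCoefficient {c : ℂ} (h : 0 < (c - a - b).re) :
    Tendsto (fun n : ℕ ↦ n * ordinaryHypergeometricCoefficient a b c n) atTop (𝓝 0) := by
  rw [← tendsto_add_atTop_iff_nat 1]
  have hmain := (tendsto_natCast_cpow_inv h).mul
    (tendsto_cpow_mul_ordinaryHypergeometricCoefficient a b c)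
  have htail := ((summable_nat_add_iff 1).2
    (summable_norm_ordinaryHypergeometricCoefficient a b h).of_norm).tendsto_atTop_zero
  have hsum := hmain.add htail
  rw [zero_mul, zero_add] at hsum
  refine hsum.congr' ?_
  filter_upwards [eventually_ne_atTop 0] with n hn
  have hn' : (n : ℂ) ≠ 0 := Nat.cast_ne_zero.2 hn
  rw [show 1 + c - a - b = 1 + (c - a - b) by ring, cpow_add _ _ hn', cpow_one]
  push_cast
  field_simp [cpow_ne_zero_iff, hn']

theorem mul_ordinaryHypergeometricCoefficient_succ {c : ℂ} (k : ℕ) (hc : c + k ≠ 0) :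
    (k + 1) * (c + k) * ordinaryHypergeometricCoefficient a b c (k + 1) =
      (a + k) * (b + k) * ordinaryHypergeometricCoefficient a b c k := by
  simp only [ordinaryHypergeometricCoefficient, ascPochhammer_succ_eval, Nat.factorial_succ,
    Nat.cast_mul, Nat.cast_succ, mul_inv]
  field_simp

theorem mul_ordinaryHypergeometricCoefficient_add_one {c : ℂ} (hc : ∀ m : ℕ, c ≠ -m)
    (k : ℕ) :
    (c + k) * ordinaryHypergeometricCoefficient a b (c + 1) k =
      c * ordinaryHypergeometricCoefficient a b c k := by
  have hk := ascPochhammer_eval_ne_zero hc k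
  have hk' := ascPochhammer_eval_ne_zero (s := c + 1)
    (by simpa using ne_neg_natCast_add_natCast hc 1) k
  have hrec : c * (ascPochhammer ℂ k).eval (c + 1) = (ascPochhammer ℂ k).eval c * (c + k) := by
    rw [← ascPochhammer_succ_eval]
    simp [ascPochhammer_succ_left, Polynomial.eval_comp]
  simp only [ordinaryHypergeometricCoefficient]
  field_simp
  linear_combination
    -((ascPochhammer ℂ k).eval a * (ascPochhammer ℂ k).eval b / k !) * hrec

theorem tsum_ordinaryHypergeometricCoefficient_contiguous {c : ℂ} (hc : ∀ m : ℕ, c ≠ -m)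
    (h : 0 < (c - a - b).re) :
    c * (c - a - b) * ∑' k, ordinaryHypergeometricCoefficient a b c k =
      (c - a) * (c - b) * ∑' k, ordinaryHypergeometricCoefficient a b (c + 1) k := by
  have hf := (summable_norm_ordinaryHypergeometricCoefficient a b h).of_norm
  have hg := (summable_norm_ordinaryHypergeometricCoefficient (c := c + 1) a b
    (by simp only [add_sub_right_comm, add_re, one_re] at h ⊢; linarith)).of_norm
  have htelescope (k : ℕ) :
      c * (c - a - b) * ordinaryHypergeometricCoefficient a b c k -
        (c - a) * (c - b) * ordinaryHypergeometricCoefficient a b (c + 1) k =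
      c * (k * ordinaryHypergeometricCoefficient a b c k -
        (k + 1 : ℕ) * ordinaryHypergeometricCoefficient a b c (k + 1)) := by
    have hck : c + k ≠ 0 := by simpa using ne_neg_natCast_add_natCast hc k 0
    have hsucc := mul_ordinaryHypergeometricCoefficient_succ a b k hck
    have hshift := mul_ordinaryHypergeometricCoefficient_add_one a b hc k
    refine mul_left_cancel₀ hck ?_
    push_cast
    linear_combination c * hsucc - (c - a) * (c - b) * hshift
  have hpartial := ((hf.hasSum.mul_left (c * (c - a - b))).sub
    (hg.hasSum.mul_left ((c - a) * (c - b)))).tendsto_sum_nat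
  simp only [htelescope, ← mul_sum, sum_range_sub', Nat.cast_zero, zero_mul, zero_sub] at hpartial
  have hzero := (tendsto_natCast_mul_ordinaryHypergeometricCoefficient a b h).neg.const_mul c
  rw [neg_zero, mul_zero] at hzero
  exact sub_eq_zero.1 (tendsto_nhds_unique hpartial hzero)

theorem ascPochhammer_mul_tsum_ordinaryHypergeometricCoefficient {c : ℂ}
    (hc : ∀ m : ℕ, c ≠ -m) (h : 0 < (c - a - b).re) (n : ℕ) :
    (ascPochhammer ℂ n).eval c * (ascPochhammer ℂ n).eval (c - a - b) *
        ∑' k, ordinaryHypergeometricCoefficient a b c k =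
      (ascPochhammer ℂ n).eval (c - a) * (ascPochhammer ℂ n).eval (c - b) *
        ∑' k, ordinaryHypergeometricCoefficient a b (c + n) k := by
  induction n with
  | zero => simp
  | succ n ih =>
    have hn : 0 < (c + n - a - b).re := by
      rw [add_sub_right_comm, add_sub_right_comm, add_re, natCast_re]
      exact add_pos_of_pos_of_nonneg h n.cast_nonneg
    have hcontiguous := tsum_ordinaryHypergeometricCoefficient_contiguous a b
      (ne_neg_natCast_add_natCast hc n) hn
    simp only [ascPochhammer_succ_eval, Nat.cast_succ, ← add_assoc]
    linear_combination (c + n) * (c - a - b + n) * ih +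
      (ascPochhammer ℂ n).eval (c - a) * (ascPochhammer ℂ n).eval (c - b) * hcontiguous

theorem norm_ordinaryHypergeometricCoefficient_succ_le {x y : ℝ} (hx : 0 < x) (hxy : x ≤ y)
    (k : ℕ) : ‖ordinaryHypergeometricCoefficient a b (y : ℂ) (k + 1)‖ ≤
      x / y * ‖ordinaryHypergeometricCoefficient a b (x : ℂ) (k + 1)‖ := by
  have hcast (z : ℝ) :
      (ascPochhammer ℂ (k + 1)).eval (z : ℂ) = (ascPochhammer ℝ (k + 1)).eval z := by
    rw [ascPochhammer_eval₂ ofRealHom, ← ofRealHom_eq_coe, Polynomial.eval₂_at_apply,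
      ofRealHom_eq_coe]
  have hPx := ascPochhammer_pos (k + 1) x hx
  have hPy := ascPochhammer_pos (k + 1) y (hx.trans_le hxy)
  have hinv : ((ascPochhammer ℝ (k + 1)).eval y)⁻¹ ≤
      x / y * ((ascPochhammer ℝ (k + 1)).eval x)⁻¹ := by
    rw [div_mul_eq_mul_div, ← div_eq_mul_inv, div_div, inv_eq_one_div,
      div_le_div_iff₀ hPy (mul_pos hPx (hx.trans_le hxy))]
    linarith [mul_ascPochhammer_eval_succ_le k hx hxy]
  simp only [ordinaryHypergeometricCoefficient, norm_mul, norm_inv, hcast, norm_real,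
    Real.norm_of_nonneg hPx.le, Real.norm_of_nonneg hPy.le]
  rw [mul_left_comm]
  exact mul_le_mul_of_nonneg_left hinv (by positivity)

theorem tendsto_tsum_ordinaryHypergeometricCoefficient_add_natCast {c : ℝ} (hc : 0 < c)
    (h : 0 < ((c : ℂ) - a - b).re) :
    Tendsto (fun n : ℕ ↦ ∑' k, ordinaryHypergeometricCoefficient a b (c + n) k)
      atTop (𝓝 1) := by
  have hS := (summable_nat_add_iff 1).2 (summable_norm_ordinaryHypergeometricCoefficient a b h)
  have hbound (n : ℕ) : ‖∑' k, ordinaryHypergeometricCoefficient a b (c + n) k - 1‖ ≤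
      c / (c + n) * ∑' k, ‖ordinaryHypergeometricCoefficient a b c (k + 1)‖ := by
    have hn : 0 < ((c : ℂ) + n - a - b).re := by
      rw [add_sub_right_comm, add_sub_right_comm, add_re, natCast_re]
      exact add_pos_of_pos_of_nonneg h n.cast_nonneg
    have hSn := summable_norm_ordinaryHypergeometricCoefficient a b hn
    have hSn' := (summable_nat_add_iff 1).2 hSn
    have h0 : ordinaryHypergeometricCoefficient a b (c + n) 0 = 1 := by
      simp [ordinaryHypergeometricCoefficient]
    have hcast : (c : ℂ) + n = ((c + n : ℝ) : ℂ) := by push_cast; ring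
    rw [hSn.of_norm.tsum_eq_zero_add, h0, add_sub_cancel_left, ← tsum_mul_left]
    calc _ ≤ ∑' k, ‖ordinaryHypergeometricCoefficient a b (c + n) (k + 1)‖ :=
          norm_tsum_le_tsum_norm hSn'
      _ ≤ _ := by
        refine Summable.tsum_le_tsum (fun k ↦ ?_) hSn' (hS.mul_left _)
        rw [hcast]
        exact norm_ordinaryHypergeometricCoefficient_succ_le a b hc
          (le_add_of_nonneg_right n.cast_nonneg) k
  have hdecay : Tendsto (fun n : ℕ ↦ c / (c + n) *
      ∑' k, ‖ordinaryHypergeometricCoefficient a b c (k + 1)‖) atTop (𝓝 0) := by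
    rw [← zero_mul (∑' k, ‖ordinaryHypergeometricCoefficient a b c (k + 1)‖)]
    exact (tendsto_const_nhds.div_atTop
      (tendsto_atTop_add_const_left _ _ tendsto_natCast_atTop_atTop)).mul_const _
  exact tendsto_sub_nhds_zero_iff.1 (squeeze_zero_norm hbound hdecay)

theorem hasSum_ordinaryHypergeometricCoefficient_gauss {c : ℝ} (hc : 0 < c)
    (h : 0 < ((c : ℂ) - a - b).re) :
    HasSum (ordinaryHypergeometricCoefficient a b (c : ℂ))
      (Gamma c * Gamma (c - a - b) / (Gamma (c - a) * Gamma (c - b))) := by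
  have hcpole := ne_neg_natCast_of_re_pos (s := c) (by simpa using hc)
  have hratio := tendsto_cpow_mul_ascPochhammer_div (c - a) (c - b) c (c - a - b)
  rw [show (c : ℂ) + (c - a - b) - (c - a) - (c - b) = 0 by ring] at hratio
  simp only [cpow_zero, one_mul] at hratio
  have hlim := hratio.mul
    ((tendsto_tsum_ordinaryHypergeometricCoefficient_add_natCast a b hc h).comp
      (tendsto_add_atTop_nat 1))
  rw [mul_one] at hlim
  have hconst (n : ℕ) : (ascPochhammer ℂ n).eval (c - a) * (ascPochhammer ℂ n).eval (c - b) /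
      ((ascPochhammer ℂ n).eval (c : ℂ) * (ascPochhammer ℂ n).eval (c - a - b)) *
        ∑' k, ordinaryHypergeometricCoefficient a b (c + n) k =
      ∑' k, ordinaryHypergeometricCoefficient a b c k := by
    rw [div_mul_eq_mul_div,
      ← ascPochhammer_mul_tsum_ordinaryHypergeometricCoefficient a b hcpole h n,
      mul_div_cancel_left₀]
    exact mul_ne_zero (ascPochhammer_eval_ne_zero hcpole n)
      (ascPochhammer_eval_ne_zero (ne_neg_natCast_of_re_pos h) n)
  have hsum := (summable_norm_ordinaryHypergeometricCoefficient a b h).of_norm.hasSum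
  rwa [tendsto_nhds_unique tendsto_const_nhds (hlim.congr fun n ↦ hconst (n + 1))] at hsum

end Complex

theorem stmt3 (ν : ℝ) (hν : 1 < ν) (lam mu : ℂ) (h : (lam + mu).re > -1) :
    HasSum
      (fun p : ℕ =>
        Polynomial.eval (-lam) (ascPochhammer ℂ p) * Polynomial.eval (-mu) (ascPochhammer ℂ p) /
          ((Nat.factorial p : ℂ) * Polynomial.eval (((ν : ℂ) + 1) / 2) (ascPochhammer ℂ p)))
      (Complex.Gamma (lam + mu + ((ν : ℂ) + 1) / 2) * Complex.Gamma (((ν : ℂ) + 1) / 2) /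
        (Complex.Gamma (lam + ((ν : ℂ) + 1) / 2) * Complex.Gamma (mu + ((ν : ℂ) + 1) / 2))) := by
  have hgauss := Complex.hasSum_ordinaryHypergeometricCoefficient_gauss (-lam) (-mu)
    (c := (ν + 1) / 2) (by linarith) (by
      simp only [sub_neg_eq_add, Complex.add_re, Complex.ofReal_re] at h ⊢
      linarith)
  rw [show (((ν + 1) / 2 : ℝ) : ℂ) = ((ν : ℂ) + 1) / 2 by push_cast; ring] at hgauss
  simp only [sub_neg_eq_add] at hgauss
  rw [mul_comm (Complex.Gamma (lam + mu + _))]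
  convert hgauss using 4 <;> ring
end

section
/- For β ∈ (0,∞) and integers 0 ≤ r ≤ R, C(R,r) · ∏_{k=0}^{n-2} [Γ(R+1+(β/2)(k+1)) Γ(1+(β/2)(k+1)) / (Γ(R-r+1+(β/2)(k+1)) Γ(r+1+(β/2)(k+1)))] = ∏_{p=1}^{r} [Γ(n+(2/β)(R-r+p)) Γ((2/β)p) / (Γ((2/β)(R-r+p)) Γ(n+(2/β)p))] for every integer n ≥ 1. -/
/-!
Writing `c = β/2`, both sides equal `∏_{p<r} ∏_{j<n} (R - r + 1 + p + c j) / (1 + p + c j)`.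
On the left, the binomial coefficient is the `k = -1` term of the product, and each Gamma
quotient in `k` telescopes over `p < r` by the functional equation `Γ(x + 1) = x Γ(x)`; on the
right, each Gamma quotient in `p` telescopes over `j < n`, and rescaling by `c` gives the same
factors.
-/

open Finset

namespace Real

theorem Gamma_add_nat_div_Gamma_eq_prod {x : ℝ} (hx : ∀ k : ℕ, x ≠ -k) (m : ℕ) :
    Gamma (x + m) / Gamma x = ∏ i ∈ range m, (x + i) := by
  induction m with
  | zero => simp [div_self (Gamma_ne_zero hx)]
  | succ m ih =>
    have hxm : x + m ≠ 0 := fun h => hx m (by linarith)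
    rw [Nat.cast_succ, ← add_assoc, Gamma_add_one hxm, mul_div_assoc, ih, prod_range_succ,
      mul_comm]

theorem Gamma_nat_add_mul_Gamma_div_eq_prod {x y : ℝ} (hx : ∀ k : ℕ, x ≠ -k)
    (hy : ∀ k : ℕ, y ≠ -k) (m : ℕ) :
    Gamma (m + x) * Gamma y / (Gamma x * Gamma (m + y)) = ∏ i ∈ range m, (x + i) / (y + i) := by
  rw [mul_div_mul_comm, ← inv_div (Gamma (m + y)), add_comm _ x, add_comm _ y,
    Gamma_add_nat_div_Gamma_eq_prod hx, Gamma_add_nat_div_Gamma_eq_prod hy, prod_div_distrib,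
    div_eq_mul_inv]

end Real

theorem ne_neg_natCast_of_pos {x : ℝ} (hx : 0 < x) (k : ℕ) : x ≠ -k :=
  (lt_of_le_of_lt (neg_nonpos.2 k.cast_nonneg) hx).ne'

noncomputable def shiftedChoose (R r : ℕ) (t : ℝ) : ℝ :=
  Real.Gamma ((R : ℝ) + 1 + t) * Real.Gamma (1 + t) /
    (Real.Gamma ((R : ℝ) - r + 1 + t) * Real.Gamma ((r : ℝ) + 1 + t))

theorem shiftedChoose_zero {R r : ℕ} (hr : r ≤ R) : shiftedChoose R r 0 = R.choose r := by
  have hRr : (R : ℝ) - r = (R - r : ℕ) := (Nat.cast_sub hr).symm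
  simp only [shiftedChoose, add_zero, hRr, Real.Gamma_nat_eq_factorial, Real.Gamma_one,
    Nat.cast_choose ℝ hr]
  ring

theorem shiftedChoose_eq_prod {R r : ℕ} (hr : r ≤ R) {t : ℝ} (ht : 0 ≤ t) :
    shiftedChoose R r t = ∏ p ∈ range r, ((R : ℝ) - r + 1 + p + t) / (1 + p + t) := by
  have hRr : (r : ℝ) ≤ R := Nat.cast_le.2 hr
  have hx : (0 : ℝ) < R - r + 1 + t := by linarith
  have hy : (0 : ℝ) < 1 + t := by linarith
  rw [shiftedChoose, show (R : ℝ) + 1 + t = r + (R - r + 1 + t) by ring,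
    show (r : ℝ) + 1 + t = r + (1 + t) by ring,
    Real.Gamma_nat_add_mul_Gamma_div_eq_prod (ne_neg_natCast_of_pos hx)
      (ne_neg_natCast_of_pos hy)]
  exact prod_congr rfl fun p _ => by ring_nf

theorem stmt5 (β : ℝ) (hβ : 0 < β) (R r : ℕ) (hr : r ≤ R) (n : ℕ) (hn : 1 ≤ n) :
    (R.choose r : ℝ) *
      ∏ k ∈ Finset.range (n - 1),
        (Real.Gamma ((R : ℝ) + 1 + β / 2 * (k + 1)) * Real.Gamma (1 + β / 2 * (k + 1)) /
          (Real.Gamma ((R : ℝ) - r + 1 + β / 2 * (k + 1)) *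
            Real.Gamma ((r : ℝ) + 1 + β / 2 * (k + 1)))) =
    ∏ p ∈ Finset.range r,
      (Real.Gamma ((n : ℝ) + 2 / β * ((R : ℝ) - r + (p + 1))) * Real.Gamma (2 / β * (p + 1)) /
        (Real.Gamma (2 / β * ((R : ℝ) - r + (p + 1))) *
          Real.Gamma ((n : ℝ) + 2 / β * (p + 1)))) := by
  obtain ⟨m, rfl⟩ : ∃ m, n = m + 1 := ⟨n - 1, by omega⟩
  have hRr : (r : ℝ) ≤ R := Nat.cast_le.2 hr
  have hleft : (R.choose r : ℝ) * ∏ k ∈ range m, shiftedChoose R r (β / 2 * (k + 1)) =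
      ∏ j ∈ range (m + 1), shiftedChoose R r (β / 2 * j) := by
    rw [prod_range_succ', ← shiftedChoose_zero hr, mul_comm]
    simp
  change (R.choose r : ℝ) * ∏ k ∈ range (m + 1 - 1), shiftedChoose R r (β / 2 * (k + 1)) = _
  rw [Nat.add_sub_cancel, hleft,
    prod_congr rfl fun j _ => shiftedChoose_eq_prod hr (by positivity), prod_comm]
  refine prod_congr rfl fun p _ => ?_
  rw [Real.Gamma_nat_add_mul_Gamma_div_eq_prod (ne_neg_natCast_of_pos (by positivity))
    (ne_neg_natCast_of_pos (by positivity))]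
  refine prod_congr rfl fun j _ => ?_
  field_simp
  ring
end

section
/- For β ∈ (0,∞) and integers 0 ≤ r ≤ R, as n → ∞: n^{-2r(R-r)/β} · C(R,r) · ∏_{k=0}^{n-2} [Γ(R+1+(β/2)(k+1)) Γ(1+(β/2)(k+1)) / (Γ(R-r+1+(β/2)(k+1)) Γ(r+1+(β/2)(k+1)))] converges to C := ∏_{p=1}^{r} Γ((2/β)p) / Γ((2/β)(R-r+p)), with error O(1/n). -/
/-!
Each Gamma quotient in the product over `k` is a ratio of two Pochhammer products of length `r`.
Exchanging the products over `k` and `p`, the product over `k` telescopes, and with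
`a_p = 2 (p + 1) / β`, `d = 2 (R - r) / β` the expression becomes the limit constant times
`∏_{p < r} n^{-d} Γ(n + a_p + d) / Γ(n + a_p)`; the binomial coefficient cancels the factors
`a_p / (a_p + d)` coming from `Γ(a_p + 1) / Γ(a_p + d + 1)`. Each factor is `1 + O(1/n)` by a
quantitative Wendel inequality: log-convexity of `Γ` gives, for every integer `M ≥ d`,
`(x / (x + d + M))^(M - d) ≤ Γ(x + d) / (x^d Γ x) ≤ (1 + M / x)^d`.
-/

open Real Finset

namespace Real

lemma Gamma_add_nat_eq_mul_prod {x : ℝ} (hx : 0 < x) (n : ℕ) :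
    Gamma (x + n) = Gamma x * ∏ i ∈ range n, (x + i) := by
  induction n with
  | zero => simp
  | succ n ih =>
    rw [Nat.cast_succ, ← add_assoc, Gamma_add_one (by positivity), ih, prod_range_succ]
    ring

lemma prod_range_add_div_add_eq {u v : ℝ} (hu : 0 < u) (hv : 0 < v) (n : ℕ) :
    ∏ i ∈ range n, (u + i) / (v + i) = Gamma (u + n) * Gamma v / (Gamma u * Gamma (v + n)) := by
  have := (Gamma_pos_of_pos hu).ne'
  have := (Gamma_pos_of_pos hv).ne'
  have : ∏ i ∈ range n, (v + i) ≠ 0 := prod_ne_zero_iff.2 fun i _ => by positivity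
  rw [prod_div_distrib, Gamma_add_nat_eq_mul_prod hu, Gamma_add_nat_eq_mul_prod hv]
  field_simp

lemma pow_mul_Gamma_le_Gamma_add_nat {x : ℝ} (hx : 0 < x) (n : ℕ) :
    x ^ n * Gamma x ≤ Gamma (x + n) := by
  rw [Gamma_add_nat_eq_mul_prod hx, mul_comm]
  gcongr
  calc x ^ n = ∏ _i ∈ range n, x := by rw [prod_const, card_range]
    _ ≤ ∏ i ∈ range n, (x + i) := prod_le_prod (fun _ _ => hx.le) fun i _ => by simp

lemma Gamma_add_nat_le_pow_mul_Gamma {x : ℝ} (hx : 0 < x) (n : ℕ) :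
    Gamma (x + n) ≤ (x + n) ^ n * Gamma x := by
  rw [Gamma_add_nat_eq_mul_prod hx, mul_comm]
  gcongr
  calc ∏ i ∈ range n, (x + i) ≤ ∏ _i ∈ range n, (x + n) :=
        prod_le_prod (fun _ _ => by positivity) fun i hi => by
          simpa using (Nat.cast_le.2 (mem_range.1 hi).le : (i : ℝ) ≤ n)
    _ = (x + n) ^ n := by rw [prod_const, card_range]

-- Log-convexity interpolates `Γ (x + d)` between `Γ x` and `Γ (x + M) ≤ (x + M) ^ M * Γ x`.
lemma Gamma_add_le_rpow_mul_Gamma {x d : ℝ} {M : ℕ} (hx : 0 < x) (hd : 0 ≤ d)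
    (hdM : d ≤ M) :
    Gamma (x + d) ≤ (x + M) ^ d * Gamma x := by
  have hxM : 0 < x + M := by positivity
  set t := d / M
  have ht : t * M = d := by
    rcases (Nat.cast_nonneg (α := ℝ) M).eq_or_lt with hM | hM
    · have : d = 0 := le_antisymm (hM ▸ hdM) hd
      simp [t, ← hM, this]
    · exact div_mul_cancel₀ d hM.ne'
  have ht0 : 0 ≤ t := by positivity
  have hconv := convexOn_log_Gamma.2 (Set.mem_Ioi.2 hx) (Set.mem_Ioi.2 hxM)
    (sub_nonneg.2 (div_le_one_of_le₀ hdM (Nat.cast_nonneg M))) ht0 (sub_add_cancel 1 t)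
  have hstep : log (Gamma (x + M)) ≤ M * log (x + M) + log (Gamma x) := by
    rw [← log_pow, ← log_mul (by positivity) (Gamma_pos_of_pos hx).ne']
    exact log_le_log (Gamma_pos_of_pos hxM) (Gamma_add_nat_le_pow_mul_Gamma hx M)
  simp only [smul_eq_mul, Function.comp] at hconv
  rw [show (1 - t) * x + t * (x + M) = x + d by rw [← ht]; ring] at hconv
  rw [← log_le_log_iff (Gamma_pos_of_pos (by positivity)) (by positivity),
    log_mul (by positivity) (Gamma_pos_of_pos hx).ne', log_rpow hxM]
  calc log (Gamma (x + d)) ≤ (1 - t) * log (Gamma x) + t * log (Gamma (x + M)) := hconv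
    _ ≤ (1 - t) * log (Gamma x) + t * (M * log (x + M) + log (Gamma x)) := by gcongr
    _ = d * log (x + M) + log (Gamma x) := by rw [← ht]; ring

lemma Gamma_add_div_rpow_mul_Gamma_le {x d : ℝ} {M : ℕ} (hx : 0 < x) (hd : 0 ≤ d)
    (hdM : d ≤ M) : Gamma (x + d) / (x ^ d * Gamma x) ≤ (1 + M / x) ^ d := by
  rw [div_le_iff₀ (by positivity), ← mul_assoc, ← mul_rpow (by positivity) hx.le,
    show (1 + M / x) * x = x + M by field_simp]
  exact Gamma_add_le_rpow_mul_Gamma hx hd hdM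

lemma div_rpow_le_Gamma_add_div_rpow_mul_Gamma {x d : ℝ} {M : ℕ} (hx : 0 < x) (hd : 0 ≤ d)
    (hdM : d ≤ M) : (x / (x + d + M)) ^ (M - d) ≤ Gamma (x + d) / (x ^ d * Gamma x) := by
  have hshift : Gamma (x + M) ≤ (x + d + M) ^ (M - d) * Gamma (x + d) := by
    have := Gamma_add_le_rpow_mul_Gamma (by positivity : 0 < x + d) (sub_nonneg.2 hdM)
      (by linarith : (M : ℝ) - d ≤ M)
    rwa [add_add_sub_cancel] at this
  rw [le_div_iff₀ (by positivity), div_rpow hx.le (by positivity), div_mul_eq_mul_div,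
    ← mul_assoc, ← rpow_add hx, sub_add_cancel, rpow_natCast, div_le_iff₀ (by positivity),
    mul_comm (Gamma (x + d))]
  exact (pow_mul_Gamma_le_Gamma_add_nat hx M).trans hshift

lemma one_add_mul_one_sub_inv_le_rpow {y d : ℝ} (hy : 0 < y) (hd : 0 ≤ d) :
    1 + d * (1 - y⁻¹) ≤ y ^ d := by
  rw [rpow_def_of_pos hy]
  have := one_sub_inv_le_log_of_pos hy
  nlinarith [add_one_le_exp (log y * d)]

lemma rpow_le_one_add_mul_sub_one_mul_rpow {y d : ℝ} (hy : 0 < y) (hd : 0 ≤ d) :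
    y ^ d ≤ 1 + d * (y - 1) * y ^ d := by
  rw [rpow_def_of_pos hy]
  set t := log y * d
  have hexp : exp t ≤ 1 + t * exp t := by
    have h := mul_le_mul_of_nonneg_right (add_one_le_exp (-t)) (exp_pos t).le
    rw [exp_neg, inv_mul_cancel₀ (exp_pos t).ne'] at h
    linarith
  have ht : t ≤ d * (y - 1) := by
    rw [mul_comm d]; exact mul_le_mul_of_nonneg_right (log_le_sub_one_of_pos hy) hd
  nlinarith [exp_pos t]

lemma exists_abs_Gamma_add_div_rpow_mul_Gamma_sub_one_le {d : ℝ} (hd : 0 ≤ d) :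
    ∃ C, 0 ≤ C ∧ ∀ x : ℝ, 1 ≤ x →
      |Gamma (x + d) / (x ^ d * Gamma x) - 1| ≤ C / x := by
  set M := ⌈d⌉₊
  have hdM : d ≤ M := Nat.le_ceil d
  refine ⟨d * M * (1 + M) ^ d + (M - d) * (d + M), by
    have := sub_nonneg.2 hdM; positivity, fun x hx => ?_⟩
  have hx0 : 0 < x := by linarith
  have hMx : (M : ℝ) / x ≤ M := div_le_self (Nat.cast_nonneg M) hx
  have hupper : Gamma (x + d) / (x ^ d * Gamma x) ≤ 1 + d * M * (1 + M) ^ d / x :=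
    calc _ ≤ (1 + M / x) ^ d := Gamma_add_div_rpow_mul_Gamma_le hx0 hd hdM
      _ ≤ 1 + d * (1 + M / x - 1) * (1 + M / x) ^ d :=
        rpow_le_one_add_mul_sub_one_mul_rpow (by positivity) hd
      _ ≤ 1 + d * (M / x) * (1 + M) ^ d := by
        rw [add_sub_cancel_left]; gcongr
      _ = 1 + d * M * (1 + M) ^ d / x := by ring
  have hlower : 1 - (M - d) * (d + M) / x ≤ Gamma (x + d) / (x ^ d * Gamma x) :=
    calc _ = 1 + (M - d) * (1 - (x / (x + d + M))⁻¹) := by field_simp; ring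
      _ ≤ (x / (x + d + M)) ^ (M - d) :=
        one_add_mul_one_sub_inv_le_rpow (by positivity) (sub_nonneg.2 hdM)
      _ ≤ _ := div_rpow_le_Gamma_add_div_rpow_mul_Gamma hx0 hd hdM
  rw [abs_sub_le_iff, add_div]
  have := sub_nonneg.2 hdM
  constructor
  · linarith [div_nonneg (mul_nonneg this (by positivity : 0 ≤ d + M)) hx0.le]
  · linarith [div_nonneg (by positivity : 0 ≤ d * M * (1 + M) ^ d) hx0.le]

end Real

/-- `u n = 1 + O(1/n)`, with one constant valid for every `n ≥ 1`. -/
def IsOneAddBigOInv (u : ℕ → ℝ) : Prop :=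
  ∃ C, ∀ n : ℕ, 1 ≤ n → |u n - 1| ≤ C / n

namespace IsOneAddBigOInv

lemma congr {u v : ℕ → ℝ} (hu : IsOneAddBigOInv u) (huv : ∀ n, 1 ≤ n → u n = v n) :
    IsOneAddBigOInv v := by
  obtain ⟨C, hC⟩ := hu
  exact ⟨C, fun n hn => huv n hn ▸ hC n hn⟩

lemma mul {u v : ℕ → ℝ} (hu : IsOneAddBigOInv u) (hv : IsOneAddBigOInv v) :
    IsOneAddBigOInv (u * v) := by
  obtain ⟨Cu, hCu⟩ := hu
  obtain ⟨Cv, hCv⟩ := hv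
  refine ⟨(1 + |Cu|) * Cv + Cu, fun n hn => ?_⟩
  have hn0 : (0 : ℝ) < n := by exact_mod_cast hn
  have hCu_le : Cu / n ≤ |Cu| :=
    (div_le_div_of_nonneg_right (le_abs_self Cu) hn0.le).trans
      (div_le_self (abs_nonneg Cu) (by exact_mod_cast hn))
  have hu_abs : |u n| ≤ 1 + |Cu| := by
    linarith [abs_sub_abs_le_abs_sub (u n) 1, abs_one (α := ℝ), hCu n hn]
  calc |(u * v) n - 1| = |u n * (v n - 1) + (u n - 1)| := by simp only [Pi.mul_apply]; ring_nf
    _ ≤ |u n| * |v n - 1| + |u n - 1| := by rw [← abs_mul]; exact abs_add_le _ _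
    _ ≤ (1 + |Cu|) * (Cv / n) + Cu / n := by gcongr; exacts [hCv n hn, hCu n hn]
    _ = ((1 + |Cu|) * Cv + Cu) / n := by ring

lemma prod {ι : Type*} (s : Finset ι) {u : ι → ℕ → ℝ}
    (hu : ∀ i ∈ s, IsOneAddBigOInv (u i)) :
    IsOneAddBigOInv (fun n => ∏ i ∈ s, u i n) := by
  classical
  induction s using Finset.induction_on with
  | empty => exact ⟨0, fun n _ => by simp⟩
  | insert i s hi ih =>
    simp_rw [prod_insert hi]
    exact (hu i (mem_insert_self i s)).mul (ih fun j hj => hu j (mem_insert_of_mem hj))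

end IsOneAddBigOInv

lemma isOneAddBigOInv_one_add_div_rpow {a d : ℝ} (ha : 0 ≤ a) (hd : 0 ≤ d) :
    IsOneAddBigOInv fun n => (1 + a / n) ^ d := by
  refine ⟨d * a * (1 + a) ^ d, fun n hn => ?_⟩
  have hn1 : (1 : ℝ) ≤ n := by exact_mod_cast hn
  have hy : 0 < 1 + a / n := by positivity
  rw [abs_of_nonneg (sub_nonneg.2 (one_le_rpow (by simp; positivity) hd))]
  calc (1 + a / n) ^ d - 1 ≤ d * (1 + a / n - 1) * (1 + a / n) ^ d := by
        linarith [rpow_le_one_add_mul_sub_one_mul_rpow hy hd]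
    _ ≤ d * (a / n) * (1 + a) ^ d := by
        rw [add_sub_cancel_left]; gcongr; exact div_le_self ha hn1
    _ = d * a * (1 + a) ^ d / n := by ring

lemma isOneAddBigOInv_Gamma_add_div_rpow_mul_Gamma {a d : ℝ} (ha : 0 ≤ a) (hd : 0 ≤ d) :
    IsOneAddBigOInv fun n => Gamma (n + a + d) / ((n + a) ^ d * Gamma (n + a)) := by
  obtain ⟨C, hC0, hC⟩ := exists_abs_Gamma_add_div_rpow_mul_Gamma_sub_one_le hd
  refine ⟨C, fun n hn => ?_⟩
  have hn1 : (1 : ℝ) ≤ n := by exact_mod_cast hn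
  calc _ ≤ C / (n + a) := hC _ (by linarith)
    _ ≤ C / n := by gcongr; linarith

lemma isOneAddBigOInv_rpow_neg_mul_Gamma_add_div_Gamma {a d : ℝ} (ha : 0 ≤ a) (hd : 0 ≤ d) :
    IsOneAddBigOInv fun n => (n : ℝ) ^ (-d) * (Gamma (n + a + d) / Gamma (n + a)) := by
  refine ((isOneAddBigOInv_one_add_div_rpow ha hd).mul
    (isOneAddBigOInv_Gamma_add_div_rpow_mul_Gamma ha hd)).congr fun n hn => ?_
  have hn0 : (0 : ℝ) < n := by exact_mod_cast hn
  have := (Gamma_pos_of_pos (by positivity : 0 < n + a)).ne'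
  rw [Pi.mul_apply, show 1 + a / n = (n + a) / n by field_simp, div_rpow (by positivity) hn0.le,
    rpow_neg hn0.le]
  have := (rpow_pos_of_pos (by positivity : 0 < n + a) d).ne'
  field_simp

lemma choose_mul_prod_div_eq_one {R r : ℕ} (hr : r ≤ R) :
    (R.choose r : ℝ) * ∏ p ∈ range r, ((p : ℝ) + 1) / ((R : ℝ) - r + (p + 1)) = 1 := by
  obtain ⟨s, rfl⟩ := Nat.exists_eq_add_of_le' hr
  have hasc : ((s + r).choose r : ℝ) * ∏ p ∈ range r, ((p : ℝ) + 1) =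
      ∏ p ∈ range r, ((s : ℝ) + (p + 1)) := by
    have h := Nat.ascFactorial_eq_factorial_mul_choose s r
    rw [Nat.ascFactorial_eq_prod_range, ← prod_range_add_one_eq_factorial, mul_comm] at h
    exact_mod_cast (h.symm.trans (prod_congr rfl fun p _ => by ring))
  rw [Nat.cast_add, add_sub_cancel_right, prod_div_distrib, ← mul_div_assoc, hasc]
  exact div_self (prod_ne_zero_iff.2 fun p _ => by positivity)

lemma rpow_mul_choose_mul_prod_Gamma_eq {β : ℝ} (hβ : 0 < β) {R r n : ℕ} (hr : r ≤ R)
    (hn : 1 ≤ n) :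
    (n : ℝ) ^ (-(2 * (r : ℝ) * ((R : ℝ) - r) / β)) * (R.choose r : ℝ) *
        (∏ k ∈ range (n - 1),
          (Gamma ((R : ℝ) + 1 + β / 2 * (k + 1)) * Gamma (1 + β / 2 * (k + 1)) /
            (Gamma ((R : ℝ) - r + 1 + β / 2 * (k + 1)) *
              Gamma ((r : ℝ) + 1 + β / 2 * (k + 1))))) =
      (∏ p ∈ range r, Gamma (2 / β * (p + 1)) / Gamma (2 / β * ((R : ℝ) - r + (p + 1)))) *
        ∏ p ∈ range r, ((n : ℝ) ^ (-(2 / β * ((R : ℝ) - r))) *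
          (Gamma (n + 2 / β * (p + 1) + 2 / β * ((R : ℝ) - r)) /
            Gamma (n + 2 / β * (p + 1)))) := by
  set s : ℝ := (R : ℝ) - r
  have hs : 0 ≤ s := sub_nonneg.2 (Nat.cast_le.2 hr)
  set d := 2 / β * s
  set a : ℕ → ℝ := fun p => 2 / β * (p + 1)
  have ha : ∀ p, 0 < a p := fun p => by positivity
  have hk : ∀ k : ℕ,
      Gamma ((R : ℝ) + 1 + β / 2 * (k + 1)) * Gamma (1 + β / 2 * (k + 1)) /
          (Gamma (s + 1 + β / 2 * (k + 1)) * Gamma ((r : ℝ) + 1 + β / 2 * (k + 1))) =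
        ∏ p ∈ range r, (a p + d + 1 + k) / (a p + 1 + k) := by
    intro k
    -- rescaled by `2 / β`, the factors are consecutive in `k`, so the product over `k` telescopes
    rw [show (R : ℝ) + 1 + β / 2 * (k + 1) = s + 1 + β / 2 * (k + 1) + r by ring,
      show (r : ℝ) + 1 + β / 2 * (k + 1) = 1 + β / 2 * (k + 1) + r by ring,
      ← prod_range_add_div_add_eq (by positivity) (by positivity)]
    refine prod_congr rfl fun p _ => ?_
    simp only [a, d]
    field_simp
    ring
  have hp : ∀ p : ℕ, ∏ k ∈ range (n - 1), (a p + d + 1 + k) / (a p + 1 + k) =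
      (p + 1) / (s + (p + 1)) * (Gamma (a p) / Gamma (a p + d)) *
        (Gamma (n + a p + d) / Gamma (n + a p)) := by
    intro p
    have had : 0 < a p + d := by linarith [ha p, show 0 ≤ d by positivity]
    rw [prod_range_add_div_add_eq (by positivity) (by positivity), Nat.cast_pred hn,
      show a p + d + 1 + (n - 1 : ℝ) = n + a p + d by ring,
      show a p + 1 + (n - 1 : ℝ) = n + a p by ring, Gamma_add_one (ha p).ne',
      Gamma_add_one had.ne']
    have := (Gamma_pos_of_pos (ha p)).ne'
    have := (Gamma_pos_of_pos had).ne'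
    have := (Gamma_pos_of_pos (by linarith [ha p] : (0 : ℝ) < n + a p)).ne'
    simp only [a, d]
    field_simp
    ring
  have hpow : (n : ℝ) ^ (-(2 * (r : ℝ) * s / β)) = ∏ _p ∈ range r, (n : ℝ) ^ (-d) := by
    rw [prod_const, card_range, ← rpow_natCast, ← rpow_mul (Nat.cast_nonneg n)]
    congr 1; ring
  rw [prod_congr rfl fun k _ => hk k, prod_comm, prod_congr rfl fun p _ => hp p, hpow,
    prod_mul_distrib, prod_mul_distrib, prod_mul_distrib]
  have hL : ∀ p : ℕ, a p + d = 2 / β * (s + (p + 1)) := fun p => by simp only [a, d]; ring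
  simp only [hL]
  linear_combination (∏ _p ∈ range r, (n : ℝ) ^ (-d)) *
    (∏ p ∈ range r, Gamma (a p) / Gamma (2 / β * (s + (p + 1)))) *
    (∏ p ∈ range r, Gamma (n + a p + d) / Gamma (n + a p)) * choose_mul_prod_div_eq_one hr

theorem stmt6 (β : ℝ) (hβ : 0 < β) (R r : ℕ) (hr : r ≤ R) :
    ∃ C₀ : ℝ, ∀ n : ℕ, 1 ≤ n →
      |(n : ℝ) ^ (-(2 * (r : ℝ) * ((R : ℝ) - r) / β)) * (R.choose r : ℝ) *
          (∏ k ∈ Finset.range (n - 1),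
            (Real.Gamma ((R : ℝ) + 1 + β / 2 * (k + 1)) * Real.Gamma (1 + β / 2 * (k + 1)) /
              (Real.Gamma ((R : ℝ) - r + 1 + β / 2 * (k + 1)) *
                Real.Gamma ((r : ℝ) + 1 + β / 2 * (k + 1))))) -
        ∏ p ∈ Finset.range r,
          Real.Gamma (2 / β * (p + 1)) / Real.Gamma (2 / β * ((R : ℝ) - r + (p + 1)))| ≤
      C₀ / n := by
  have hd : 0 ≤ 2 / β * ((R : ℝ) - r) := by
    have := sub_nonneg.2 (Nat.cast_le (α := ℝ).2 hr); positivity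
  obtain ⟨C, hC⟩ := IsOneAddBigOInv.prod (range r) fun p _ =>
    isOneAddBigOInv_rpow_neg_mul_Gamma_add_div_Gamma (by positivity : 0 ≤ 2 / β * (p + 1)) hd
  set L := ∏ p ∈ range r, Gamma (2 / β * (p + 1)) / Gamma (2 / β * ((R : ℝ) - r + (p + 1)))
  refine ⟨|L| * C, fun n hn => ?_⟩
  rw [rpow_mul_choose_mul_prod_Gamma_eq hβ hr hn, ← mul_sub_one, abs_mul, mul_div_assoc]
  exact mul_le_mul_of_nonneg_left (hC n hn) (abs_nonneg L)
end

section
/- Let A be a square matrix with strictly positive entries all of whose row sums equal the same value s. Then s is an eigenvalue of A with the all-ones eigenvector, s is a simple eigenvalue, and every other eigenvalue λ of A satisfies |λ| < s. -/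
/-!
Divide row `i` of `A` by `s` to get probability weights. If `A v = μ v` and `‖v i‖` is maximal,
then `(μ / s) v i` is a weighted average of the `v j`, and in a strictly convex space such an
average of vectors of norm `≤ ‖v i‖` has norm `< ‖v i‖` unless all `v j` coincide. Hence
`‖μ‖ < s` for every non-constant eigenvector, and the real `s`-eigenvectors are the constants.
There is no Jordan chain at `s` either: `A v = s v + c 𝟙` forces `c = 0`, by evaluating at a
maximum and at a minimum of `v`. So the generalized `s`-eigenspace is the line of constants,
whose dimension is the multiplicity of `s` as a root of the characteristic polynomial.
-/

open Matrix Module Finset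

theorem Module.End.maxGenEigenspace_eq_eigenspace_of_sub_smul_mem {R M : Type*} [CommRing R]
    [AddCommGroup M] [Module R M] (f : End R M) (μ : R)
    (h : ∀ x, f x - μ • x ∈ f.eigenspace μ → f x = μ • x) :
    f.maxGenEigenspace μ = f.eigenspace μ := by
  refine le_antisymm (fun x hx => ?_) eigenspace_le_maxGenEigenspace
  obtain ⟨k, hk⟩ := (f.mem_maxGenEigenspace μ x).1 hx
  clear hx
  induction k generalizing x with
  | zero => simp_all
  | succ k ih =>
    have hfx : f x - μ • x ∈ f.eigenspace μ :=
      ih _ (by rwa [pow_succ, mul_apply] at hk)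
    exact mem_eigenspace_iff.2 (h x hfx)

namespace Matrix

variable {ι : Type*} [Fintype ι] {A : Matrix ι ι ℝ} {s : ℝ}

theorem mulVec_one_eq_const_of_rowSum (hrow : ∀ i, ∑ j, A i j = s) :
    A *ᵥ (fun _ => 1) = fun _ => s := by
  ext i
  simp [mulVec, dotProduct, hrow i]

theorem mulVec_apply_le_of_forall_le (hA : ∀ i j, 0 ≤ A i j) (hrow : ∀ i, ∑ j, A i j = s)
    {v : ι → ℝ} {i : ι} (hi : ∀ j, v j ≤ v i) : (A *ᵥ v) i ≤ s * v i := by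
  rw [← hrow i, sum_mul]
  exact sum_le_sum fun j _ => mul_le_mul_of_nonneg_left (hi j) (hA i j)

theorem eq_zero_of_mulVec_eq_smul_add_const [Nonempty ι] (hA : ∀ i j, 0 ≤ A i j)
    (hrow : ∀ i, ∑ j, A i j = s) {v : ι → ℝ} {c : ℝ} (hv : A *ᵥ v = s • v + fun _ => c) :
    c = 0 := by
  have hv' : ∀ i, (A *ᵥ v) i = s * v i + c := fun i => congrFun hv i
  obtain ⟨i, hi⟩ := Finite.exists_max v
  obtain ⟨k, hk⟩ := Finite.exists_min v
  have hmax := mulVec_apply_le_of_forall_le hA hrow hi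
  have hmin := mulVec_apply_le_of_forall_le hA hrow (v := -v) (i := k) fun j => neg_le_neg (hk j)
  simp only [mulVec_neg, Pi.neg_apply, hv'] at hmin
  rw [hv'] at hmax
  linarith

theorem exists_norm_sum_smul_lt {V : Type*} [NormedAddCommGroup V] [NormedSpace ℝ V]
    [StrictConvexSpace ℝ V] (hpos : ∀ i j, 0 < A i j) (hrow : ∀ i, ∑ j, A i j = s)
    {v : ι → V} {j k : ι} (hjk : v j ≠ v k) : ∃ i, ‖∑ l, A i l • v l‖ < s * ‖v i‖ := by
  have : Nonempty ι := ⟨j⟩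
  obtain ⟨i, hi⟩ := Finite.exists_max fun l => ‖v l‖
  have hs : 0 < s := hrow i ▸ sum_pos (fun l _ => hpos i l) univ_nonempty
  have hw : ∀ l, 0 < A i l / s := fun l => div_pos (hpos i l) hs
  have hlt : ‖∑ l, (A i l / s) • v l‖ < ‖v i‖ :=
    norm_sum_lt_of_strictConvexSpace (fun l _ => (hw l).le)
      (by rw [← sum_div, hrow i, div_self hs.ne']) (mem_univ j) (mem_univ k) hjk
      (hw j).ne' (hw k).ne' fun l _ => hi l
  refine ⟨i, ?_⟩
  calc ‖∑ l, A i l • v l‖ = ‖s • ∑ l, (A i l / s) • v l‖ := by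
        simp only [smul_sum, smul_smul, mul_div_cancel₀ _ hs.ne']
    _ = s * ‖∑ l, (A i l / s) • v l‖ := by rw [norm_smul, Real.norm_of_nonneg hs.le]
    _ < s * ‖v i‖ := mul_lt_mul_of_pos_left hlt hs

theorem exists_eq_const_of_mulVec_eq_smul (hpos : ∀ i j, 0 < A i j)
    (hrow : ∀ i, ∑ j, A i j = s) {v : ι → ℝ} (hv : A *ᵥ v = s • v) : ∃ c, v = fun _ => c := by
  rcases isEmpty_or_nonempty ι with _ | ⟨⟨i₀⟩⟩
  · exact ⟨0, Subsingleton.elim _ _⟩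
  refine ⟨v i₀, funext fun j => by_contra fun hj => ?_⟩
  obtain ⟨i, hi⟩ := exists_norm_sum_smul_lt hpos hrow hj
  rw [show ∑ l, A i l • v l = s * v i from congrFun hv i, norm_mul, Real.norm_eq_abs] at hi
  nlinarith [le_abs_self s, norm_nonneg (v i)]

theorem eq_or_norm_lt_of_mulVec_eq_smul (hpos : ∀ i j, 0 < A i j) (hrow : ∀ i, ∑ j, A i j = s)
    {μ : ℂ} {v : ι → ℂ} (hv0 : v ≠ 0) (hv : A.map Complex.ofReal *ᵥ v = μ • v) :
    μ = s ∨ ‖μ‖ < s := by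
  have heig : ∀ i, ∑ l, A i l • v l = μ * v i := fun i => by
    simpa [mulVec, dotProduct, Complex.real_smul] using congrFun hv i
  by_cases hconst : ∃ j k, v j ≠ v k
  · obtain ⟨j, k, hjk⟩ := hconst
    obtain ⟨i, hi⟩ := exists_norm_sum_smul_lt hpos hrow hjk
    rw [heig, norm_mul] at hi
    exact Or.inr (lt_of_mul_lt_mul_right hi (norm_nonneg _))
  · push Not at hconst
    obtain ⟨i, hi⟩ : ∃ i, v i ≠ 0 := Function.ne_iff.1 hv0
    have : (s : ℂ) * v i = μ * v i := by
      rw [← heig, ← hrow i, Complex.ofReal_sum, sum_mul]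
      simp [hconst _ i, Complex.real_smul]
    exact Or.inl (mul_right_cancel₀ hi this).symm

theorem eigenspace_toLin'_eq_span [DecidableEq ι] (hpos : ∀ i j, 0 < A i j)
    (hrow : ∀ i, ∑ j, A i j = s) :
    End.eigenspace (toLin' A) s = ℝ ∙ fun _ => 1 := by
  ext v
  rw [End.mem_eigenspace_iff, toLin'_apply, Submodule.mem_span_singleton]
  constructor
  · intro hv
    obtain ⟨c, rfl⟩ := exists_eq_const_of_mulVec_eq_smul hpos hrow hv
    exact ⟨c, by ext; simp⟩
  · rintro ⟨c, rfl⟩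
    rw [mulVec_smul, mulVec_one_eq_const_of_rowSum hrow]
    ext; simp [mul_comm]

theorem rootMultiplicity_charpoly_eq_one [Nonempty ι] [DecidableEq ι] (hpos : ∀ i j, 0 < A i j)
    (hrow : ∀ i, ∑ j, A i j = s) : A.charpoly.rootMultiplicity s = 1 := by
  rw [← charpoly_toLin', ← LinearMap.finrank_maxGenEigenspace_eq,
    End.maxGenEigenspace_eq_eigenspace_of_sub_smul_mem, eigenspace_toLin'_eq_span hpos hrow]
  · exact finrank_span_singleton (Function.ne_iff.2 ⟨Classical.arbitrary ι, one_ne_zero⟩)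
  · intro v hv
    rw [eigenspace_toLin'_eq_span hpos hrow, Submodule.mem_span_singleton] at hv
    obtain ⟨c, hc⟩ := hv
    have hAv : A *ᵥ v = s • v + fun _ => c := by
      rw [← toLin'_apply, ← sub_eq_iff_eq_add', ← hc]
      ext; simp
    rw [toLin'_apply, hAv, eq_zero_of_mulVec_eq_smul_add_const (fun i j => (hpos i j).le) hrow hAv]
    ext; simp

end Matrix

theorem stmt11 (N : ℕ) (hN : 0 < N) (A : Matrix (Fin N) (Fin N) ℝ)
    (hpos : ∀ i j, 0 < A i j) (s : ℝ) (hrow : ∀ i, ∑ j, A i j = s) :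
    A.mulVec (fun _ => 1) = (fun _ => s) ∧
    Polynomial.rootMultiplicity s A.charpoly = 1 ∧
    (∀ (μ : ℂ) (v : Fin N → ℂ), v ≠ 0 →
      (A.map Complex.ofReal).mulVec v = μ • v → μ = s ∨ ‖μ‖ < s) ∧
    (∀ v : Fin N → ℝ, A.mulVec v = s • v → ∃ c : ℝ, v = fun _ => c) := by
  have : Nonempty (Fin N) := Fin.pos_iff_nonempty.1 hN
  exact ⟨mulVec_one_eq_const_of_rowSum hrow, rootMultiplicity_charpoly_eq_one hpos hrow,
    fun _ _ hv0 hv => eq_or_norm_lt_of_mulVec_eq_smul hpos hrow hv0 hv,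
    fun _ hv => exists_eq_const_of_mulVec_eq_smul hpos hrow hv⟩
end

section
/- Uniqueness for the singular ODE: let Δ, V₀, β, r, R, χ be as above. If Ψ₁, Ψ₂ : (0,∞) → ℂ^N are C¹ solutions of Ψ'(t) = ((2/(βt))Δ + V₀)Ψ(t) both satisfying t^{-2r(R-r)/β}Ψ_j(t) = χ + O(t) as t ↓ 0, then Ψ₁ = Ψ₂. -/
/-!
Energy estimate. The difference `u = Ψ₁ - Ψ₂` solves the same linear equation, and
`Re ⟪x, Δ x⟫ ≤ r(R-r) ‖x‖²`, so `g = ‖u‖²` satisfies `g' ≤ (2α/t + 2‖V₀‖) g` with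
`α = 2r(R-r)/β`. Hence `e^{-2‖V₀‖t} t^{-2α} g(t)` is nonincreasing on `(0, ∞)`; it tends to `0`
as `t ↓ 0` because `t^{-α} u(t) = O(t)`, so it vanishes identically.
-/

open Asymptotics ComplexOrder Filter Set Topology Real

theorem nonpos_of_hasDerivAt_le_of_tendsto {g g' : ℝ → ℝ} {a b : ℝ}
    (hg : ∀ t, 0 < t → HasDerivAt g (g' t) t)
    (hle : ∀ t, 0 < t → g' t ≤ (a / t + b) * g t)
    (hlim : Tendsto (fun t => t ^ (-a) * g t) (𝓝[>] 0) (𝓝 0)) {t : ℝ} (ht : 0 < t) :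
    g t ≤ 0 := by
  set H : ℝ → ℝ := fun s => exp (-b * s) * (s ^ (-a) * g s)
  have hH : ∀ s, 0 < s →
      HasDerivAt H (exp (-b * s) * s ^ (-a) * (g' s - (a / s + b) * g s)) s := by
    intro s hs
    have hexp := ((hasDerivAt_id s).const_mul (-b)).exp
    have hpow := Real.hasDerivAt_rpow_const (p := -a) (Or.inl hs.ne')
    refine (hexp.mul (hpow.mul (hg s hs))).congr_deriv ?_
    simp only [id, Pi.mul_apply]
    rw [Real.rpow_sub_one hs.ne']
    field_simp
    ring
  have hanti : AntitoneOn H (Ioi 0) := by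
    refine antitoneOn_of_hasDerivWithinAt_nonpos (convex_Ioi 0)
      (f' := fun s => exp (-b * s) * s ^ (-a) * (g' s - (a / s + b) * g s))
      (fun s hs => (hH s hs).continuousAt.continuousWithinAt) ?_ ?_ <;> rw [interior_Ioi]
    · exact fun s hs => (hH s hs).hasDerivWithinAt
    · exact fun s hs => mul_nonpos_of_nonneg_of_nonpos
        (mul_pos (exp_pos _) (rpow_pos_of_pos hs _)).le (sub_nonpos.2 (hle s hs))
  have hHlim : Tendsto H (𝓝[>] 0) (𝓝 0) := by
    have hexp : Tendsto (fun s : ℝ => exp (-b * s)) (𝓝[>] 0) (𝓝 1) :=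
      ((continuous_const_mul (-b)).rexp.tendsto' 0 1 (by simp)).mono_left nhdsWithin_le_nhds
    simpa [H] using hexp.mul hlim
  have hHt : H t ≤ 0 :=
    ge_of_tendsto hHlim <| by
      filter_upwards [Ioo_mem_nhdsGT ht] with s hs using hanti hs.1 ht hs.2.le
  have hpos : 0 < exp (-b * t) * t ^ (-a) := by positivity
  exact nonpos_of_mul_nonpos_right (by simpa [H, mul_assoc] using hHt) hpos

section InnerProductSpace

variable {F : Type*} [NormedAddCommGroup F] [InnerProductSpace ℝ F]

open scoped RealInnerProductSpace

theorem eq_zero_of_hasDerivAt_of_inner_le {u u' : ℝ → F} {a b : ℝ}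
    (hu : ∀ t, 0 < t → HasDerivAt u (u' t) t)
    (hle : ∀ t, 0 < t → ⟪u t, u' t⟫ ≤ (a / t + b) * ‖u t‖ ^ 2)
    (hlim : Tendsto (fun t => t ^ (-a) • u t) (𝓝[>] 0) (𝓝 0)) {t : ℝ} (ht : 0 < t) :
    u t = 0 := by
  have hsq : Tendsto (fun t => t ^ (-(2 * a)) * ‖u t‖ ^ 2) (𝓝[>] 0) (𝓝 0) := by
    have h0 : Tendsto (fun t => ‖t ^ (-a) • u t‖ ^ 2) (𝓝[>] 0) (𝓝 0) := by
      simpa using hlim.norm.pow 2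
    refine h0.congr' ?_
    filter_upwards [self_mem_nhdsWithin] with s (hs : 0 < s)
    rw [norm_smul, norm_of_nonneg (rpow_pos_of_pos hs _).le, mul_pow, ← rpow_natCast,
      ← rpow_mul hs.le]
    push_cast
    ring_nf
  have hnonpos : ‖u t‖ ^ 2 ≤ 0 :=
    nonpos_of_hasDerivAt_le_of_tendsto (b := 2 * b) (fun s hs => (hu s hs).norm_sq)
      (fun s hs => by linear_combination 2 * hle s hs) hsq ht
  exact norm_eq_zero.1 (pow_eq_zero_iff two_ne_zero |>.1 (le_antisymm hnonpos (by positivity)))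

theorem eq_zero_of_hasDerivAt_div_smul_add (D V : F →L[ℝ] F) {κ μ : ℝ} (hκ : 0 ≤ κ)
    (hD : ∀ x, ⟪x, D x⟫ ≤ μ * ‖x‖ ^ 2) {u : ℝ → F}
    (hu : ∀ t, 0 < t → HasDerivAt u ((κ / t) • D (u t) + V (u t)) t)
    (hlim : Tendsto (fun t => t ^ (-(κ * μ)) • u t) (𝓝[>] 0) (𝓝 0)) {t : ℝ} (ht : 0 < t) :
    u t = 0 := by
  refine eq_zero_of_hasDerivAt_of_inner_le (b := ‖V‖) hu (fun s hs => ?_) hlim ht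
  have hV : ⟪u s, V (u s)⟫ ≤ ‖V‖ * ‖u s‖ ^ 2 :=
    calc ⟪u s, V (u s)⟫ ≤ ‖u s‖ * ‖V (u s)‖ := real_inner_le_norm _ _
      _ ≤ ‖u s‖ * (‖V‖ * ‖u s‖) := by gcongr; exact V.le_opNorm _
      _ = ‖V‖ * ‖u s‖ ^ 2 := by ring
  calc ⟪u s, (κ / s) • D (u s) + V (u s)⟫
      = κ / s * ⟪u s, D (u s)⟫ + ⟪u s, V (u s)⟫ := by rw [inner_add_right, real_inner_smul_right]
    _ ≤ κ / s * (μ * ‖u s‖ ^ 2) + ‖V‖ * ‖u s‖ ^ 2 := by gcongr; exact hD _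
    _ = (κ * μ / s + ‖V‖) * ‖u s‖ ^ 2 := by ring

end InnerProductSpace

theorem EuclideanSpace.real_inner_eq_re_inner {n : Type*} [Fintype n] (x y : EuclideanSpace ℂ n) :
    inner ℝ x y = RCLike.re (inner ℂ x y) := by
  simp [PiLp.inner_apply, Complex.inner, mul_comm]

theorem real_inner_toEuclideanCLM_le_of_posSemidef {n : Type*} [Fintype n] [DecidableEq n]
    {Δ : Matrix n n ℂ} {c : ℝ} (h : ((c : ℂ) • (1 : Matrix n n ℂ) - Δ).PosSemidef)
    (x : EuclideanSpace ℂ n) :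
    inner ℝ x (Matrix.toEuclideanCLM (𝕜 := ℂ) Δ x) ≤ c * ‖x‖ ^ 2 := by
  have hpos := (Matrix.isPositive_toEuclideanLin_iff.2 h).re_inner_nonneg_right x
  have hsplit : Matrix.toEuclideanLin ((c : ℂ) • 1 - Δ) x =
      (c : ℂ) • x - Matrix.toEuclideanCLM (𝕜 := ℂ) Δ x := by
    rw [map_sub, map_smul, LinearMap.sub_apply, LinearMap.smul_apply]
    ext i
    simp
  rw [hsplit, inner_sub_right, inner_smul_right, inner_self_eq_norm_sq_to_K, map_sub,
    sub_nonneg] at hpos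
  rw [EuclideanSpace.real_inner_eq_re_inner]
  convert hpos using 1
  simp [← Complex.ofReal_pow]

theorem stmt15_general (N R r : ℕ) (β : ℝ) (hβ : 0 < β)
    (Δ V₀ : Matrix (Fin N) (Fin N) ℂ)
    (hpsd : ((((r : ℝ) * ((R : ℝ) - r) : ℝ) : ℂ) • (1 : Matrix (Fin N) (Fin N) ℂ) -
        Δ).PosSemidef)
    (χ : Fin N → ℂ)
    (Ψ₁ Ψ₂ : ℝ → Fin N → ℂ)
    (hode1 : ∀ t : ℝ, 0 < t →
      HasDerivAt Ψ₁ ((2 / (β * t)) • Δ.mulVec (Ψ₁ t) + V₀.mulVec (Ψ₁ t)) t)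
    (hode2 : ∀ t : ℝ, 0 < t →
      HasDerivAt Ψ₂ ((2 / (β * t)) • Δ.mulVec (Ψ₂ t) + V₀.mulVec (Ψ₂ t)) t)
    (hasy1 : (fun t : ℝ => t ^ (-(2 * (r : ℝ) * ((R : ℝ) - r) / β)) • Ψ₁ t - χ)
        =O[nhdsWithin 0 (Set.Ioi 0)] (fun t => t))
    (hasy2 : (fun t : ℝ => t ^ (-(2 * (r : ℝ) * ((R : ℝ) - r) / β)) • Ψ₂ t - χ)
        =O[nhdsWithin 0 (Set.Ioi 0)] (fun t => t)) :
    ∀ t : ℝ, 0 < t → Ψ₁ t = Ψ₂ t := by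
  -- `Fin N → ℂ` carries the sup norm; the energy argument needs the Euclidean one.
  let e := PiLp.continuousLinearEquiv 2 ℝ (fun _ : Fin N => ℂ)
  let D := (Matrix.toEuclideanCLM (𝕜 := ℂ) Δ).restrictScalars ℝ
  let V := (Matrix.toEuclideanCLM (𝕜 := ℂ) V₀).restrictScalars ℝ
  set u : ℝ → EuclideanSpace ℂ (Fin N) := fun t => WithLp.toLp 2 (Ψ₁ t - Ψ₂ t)
  have hu : ∀ t, 0 < t → HasDerivAt u ((2 / β / t) • D (u t) + V (u t)) t := by
    intro t ht
    have hdiff : HasDerivAt (fun s => Ψ₁ s - Ψ₂ s)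
        ((2 / β / t) • Δ.mulVec (Ψ₁ t - Ψ₂ t) + V₀.mulVec (Ψ₁ t - Ψ₂ t)) t :=
      ((hode1 t ht).sub (hode2 t ht)).congr_deriv <| by
        simp only [Matrix.mulVec_sub, div_div]
        module
    exact e.symm.hasFDerivAt.comp_hasDerivAt t hdiff
  have hlim : Tendsto (fun t => t ^ (-(2 / β * (r * (R - r)))) • u t) (𝓝[>] 0) (𝓝 0) := by
    have hO := (hasy1.sub hasy2).trans_tendsto (tendsto_id.mono_left nhdsWithin_le_nhds)
    have := (e.symm.continuous.tendsto 0).comp hO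
    rw [show 2 / β * (r * (R - r)) = 2 * r * (R - r) / β by ring]
    simpa [Function.comp_def, e, u, smul_sub] using this
  intro t ht
  have hut : u t = 0 := eq_zero_of_hasDerivAt_div_smul_add D V (by positivity)
    (real_inner_toEuclideanCLM_le_of_posSemidef hpsd) hu hlim ht
  simpa [u, sub_eq_zero] using congrArg WithLp.ofLp hut

theorem stmt15 (N R r : ℕ) (β : ℝ) (hβ : 0 < β)
    (Δ V₀ : Matrix (Fin N) (Fin N) ℂ) (hherm : Δ.IsHermitian)
    (hpsd : ((((r : ℝ) * ((R : ℝ) - r) : ℝ) : ℂ) • (1 : Matrix (Fin N) (Fin N) ℂ) -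
        Δ).PosSemidef)
    (χ : Fin N → ℂ)
    (hχ : Δ.mulVec χ = (((r : ℝ) * ((R : ℝ) - r) : ℝ) : ℂ) • χ)
    (Ψ₁ Ψ₂ : ℝ → Fin N → ℂ)
    (hode1 : ∀ t : ℝ, 0 < t →
      HasDerivAt Ψ₁ ((2 / (β * t)) • Δ.mulVec (Ψ₁ t) + V₀.mulVec (Ψ₁ t)) t)
    (hode2 : ∀ t : ℝ, 0 < t →
      HasDerivAt Ψ₂ ((2 / (β * t)) • Δ.mulVec (Ψ₂ t) + V₀.mulVec (Ψ₂ t)) t)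
    (hasy1 : (fun t : ℝ => t ^ (-(2 * (r : ℝ) * ((R : ℝ) - r) / β)) • Ψ₁ t - χ)
        =O[nhdsWithin 0 (Set.Ioi 0)] (fun t => t))
    (hasy2 : (fun t : ℝ => t ^ (-(2 * (r : ℝ) * ((R : ℝ) - r) / β)) • Ψ₂ t - χ)
        =O[nhdsWithin 0 (Set.Ioi 0)] (fun t => t)) :
    ∀ t : ℝ, 0 < t → Ψ₁ t = Ψ₂ t :=
  stmt15_general N R r β hβ Δ V₀ hpsd χ Ψ₁ Ψ₂ hode1 hode2 hasy1 hasy2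
end
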